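/- arXiv:2008.04462 — 5 statements merged into one kernel-verified Lean document; each statement's English description precedes it below -/
import Mathlib

section
/- Let X be a metric space, x₀ ∈ X, and let γ : X → X be a bijective isometry. Write |γ|_X = d(γx₀, x₀) and let |γ|_{X,∞} = lim_{n→∞} d(γⁿx₀, x₀)/n be the stable translation length. Then liminf_{n→∞} (γⁿx₀ · γ⁻¹x₀)_{x₀} ≤ ½(|γ|_X − |γ|_{X,∞}) ≤ limsup_{n→∞} (γⁿx₀ · γ⁻¹x₀)_{x₀}. -/
/-!
Put `aₙ = d(γⁿx₀, x₀)` and `g = d(γx₀, x₀) = d(γ⁻¹x₀, x₀)`. Since `γ` is an isometry,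
`d(γⁿx₀, γ⁻¹x₀) = aₙ₊₁`, so `(γⁿx₀ · γ⁻¹x₀)_{x₀} = (aₙ + g - aₙ₊₁)/2` and the increments of `a`
are `g - 2 (γⁿx₀ · γ⁻¹x₀)_{x₀}`. As `aₙ/n → L`, increments that are eventually `≥ m` force
`m ≤ L`, and increments that are eventually `≤ m` force `L ≤ m`; these are the two inequalities.
-/

open Filter Topology

section GrowthRate

variable {a : ℕ → ℝ} {L m : ℝ}

theorem le_of_tendsto_div_of_eventually_add_le (hL : Tendsto (fun n : ℕ => a n / n) atTop (𝓝 L))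
    (h : ∀ᶠ n in atTop, a n + m ≤ a (n + 1)) : m ≤ L := by
  obtain ⟨N, hN⟩ := eventually_atTop.1 h
  have hlin : ∀ n ≥ N, a N + ((n : ℝ) - N) * m ≤ a n := by
    intro n hn
    induction n, hn using Nat.le_induction with
    | base => simp
    | succ n hn ih => push_cast; linarith [hN n hn]
  have hlow : Tendsto (fun n : ℕ => (a N - N * m) / n + m) atTop (𝓝 m) := by
    simpa using (tendsto_const_div_atTop_nhds_zero_nat (a N - N * m)).add_const m
  refine le_of_tendsto_of_tendsto hlow hL ?_
  filter_upwards [eventually_ge_atTop N, eventually_gt_atTop 0] with n hn hpos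
  have hpos' : (0 : ℝ) < n := by exact_mod_cast hpos
  rw [div_add' _ _ _ hpos'.ne', div_le_div_iff_of_pos_right hpos']
  linarith [hlin n hn]

theorem le_of_tendsto_div_of_eventually_le_add (hL : Tendsto (fun n : ℕ => a n / n) atTop (𝓝 L))
    (h : ∀ᶠ n in atTop, a (n + 1) ≤ a n + m) : L ≤ m := by
  have hL' : Tendsto (fun n : ℕ => -a n / n) atTop (𝓝 (-L)) := by
    simpa only [neg_div] using hL.neg
  have := le_of_tendsto_div_of_eventually_add_le (m := -m) hL' (h.mono fun n hn => by linarith)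
  linarith

end GrowthRate

section GromovProduct

variable {X : Type*} [PseudoMetricSpace X]

/-- The Gromov product `(x · y)_w`. -/
noncomputable def gromovProduct (w x y : X) : ℝ :=
  (dist x w + dist y w - dist x y) / 2

theorem gromovProduct_nonneg (w x y : X) : 0 ≤ gromovProduct w x y := by
  unfold gromovProduct
  linarith [dist_triangle_right x y w]

theorem gromovProduct_le_dist_right (w x y : X) : gromovProduct w x y ≤ dist y w := by
  unfold gromovProduct
  linarith [dist_triangle x y w]

theorem IsometryEquiv.dist_symm_apply_self (γ : X ≃ᵢ X) (x : X) :
    dist (γ.symm x) x = dist (γ x) x := by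
  rw [← γ.dist_eq, γ.apply_symm_apply, dist_comm]

theorem IsometryEquiv.gromovProduct_iterate_symm (γ : X ≃ᵢ X) (x : X) (n : ℕ) :
    gromovProduct x ((⇑γ)^[n] x) (γ.symm x) =
      (dist ((⇑γ)^[n] x) x + dist (γ x) x - dist ((⇑γ)^[n + 1] x) x) / 2 := by
  rw [gromovProduct, γ.dist_symm_apply_self, ← γ.dist_eq ((⇑γ)^[n] x) (γ.symm x),
    γ.apply_symm_apply, Function.iterate_succ_apply']

end GromovProduct

/-- For a bijective isometry `γ` of a metric space `X` with basepoint `x₀`,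
with `|γ|_X = d(γ x₀, x₀)` and stable translation length `L = lim d(γⁿ x₀, x₀)/n`, one has
`liminf (γⁿx₀ · γ⁻¹x₀)_{x₀} ≤ ½(|γ|_X − L) ≤ limsup (γⁿx₀ · γ⁻¹x₀)_{x₀}`,
where `(x · y)_w = ½(d(x,w) + d(y,w) − d(x,y))` is the Gromov product. -/
theorem gromov_product_liminf_limsup_stable_length
    {X : Type*} [MetricSpace X] (x₀ : X) (γ : X ≃ᵢ X) (L : ℝ)
    (hL : Tendsto (fun n : ℕ => dist ((⇑γ)^[n] x₀) x₀ / n) atTop (nhds L)) :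
    liminf (fun n : ℕ =>
        (dist ((⇑γ)^[n] x₀) x₀ + dist (γ.symm x₀) x₀ - dist ((⇑γ)^[n] x₀) (γ.symm x₀)) / 2)
        atTop ≤ (dist (γ x₀) x₀ - L) / 2 ∧
      (dist (γ x₀) x₀ - L) / 2 ≤ limsup (fun n : ℕ =>
        (dist ((⇑γ)^[n] x₀) x₀ + dist (γ.symm x₀) x₀ - dist ((⇑γ)^[n] x₀) (γ.symm x₀)) / 2)
        atTop := by
  let p : ℕ → ℝ := fun n => gromovProduct x₀ ((⇑γ)^[n] x₀) (γ.symm x₀)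
  change liminf p atTop ≤ _ ∧ _ ≤ limsup p atTop
  have hp := γ.gromovProduct_iterate_symm x₀
  constructor
  · refine liminf_le_of_le (isBoundedUnder_of ⟨0, fun n => gromovProduct_nonneg _ _ _⟩)
      fun c hc => ?_
    have := le_of_tendsto_div_of_eventually_le_add (m := dist (γ x₀) x₀ - 2 * c) hL
      (hc.mono fun n hn => by linarith [hp n])
    linarith
  · refine le_limsup_of_le (isBoundedUnder_of ⟨_, fun n => gromovProduct_le_dist_right _ _ _⟩)
      fun c hc => ?_
    have := le_of_tendsto_div_of_eventually_add_le (m := dist (γ x₀) x₀ - 2 * c) hL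
      (hc.mono fun n hn => by linarith [hp n])
    linarith
end

section
/- Let d ≥ 2 and let g ∈ GL(d, ℝ) admit a singular value decomposition g = k D k', where k, k' are orthogonal d × d matrices and D is diagonal with entries D₁₁ ≥ D₂₂ ≥ … ≥ D_dd > 0. Suppose v ∈ ℝ^d is a unit vector with g v = λ v for some real number λ ≠ 0. Then 1 − ⟨v, k e₁⟩² ≤ (D₂₂ / |λ|)². In particular, the sine of the angle between the eigenline [v] and the Cartan attractor [k e₁] of g is at most σ₂(g)/|λ|. -/
/-!
In the coordinates `c = kᵀ v` and `u = k' v`, both unit vectors, the eigen-equation `g v = λ v`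
reads `λ cᵢ = Dᵢ uᵢ`. Hence `λ² (1 - c₀²) = ∑_{i ≠ 0} Dᵢ² uᵢ² ≤ D₁² ∑ uᵢ² = D₁²`.
-/

open Matrix Finset

section

variable {ι : Type*} [Fintype ι]

lemma dotProduct_mulVec_self_of_transpose_mul_self [DecidableEq ι] {R : Type*} [CommSemiring R]
    {A : Matrix ι ι R} (hA : Aᵀ * A = 1) (v : ι → R) : A *ᵥ v ⬝ᵥ A *ᵥ v = v ⬝ᵥ v := by
  rw [dotProduct_mulVec, ← mulVec_transpose, mulVec_mulVec, hA, one_mulVec]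

lemma smul_transpose_mulVec_eq_mul_mulVec {R : Type*} [CommRing R] [DecidableEq ι]
    {g k k' : Matrix ι ι R} {D v : ι → R} {l : R}
    (hk : kᵀ * k = 1) (hg : g = k * diagonal D * k') (heig : g *ᵥ v = l • v) :
    l • (kᵀ *ᵥ v) = D * (k' *ᵥ v) := by
  have hkg : kᵀ * g = diagonal D * k' := by
    rw [hg, ← Matrix.mul_assoc, ← Matrix.mul_assoc, hk, Matrix.one_mul]
  calc l • (kᵀ *ᵥ v) = kᵀ *ᵥ (g *ᵥ v) := by rw [heig, mulVec_smul]
    _ = D * (k' *ᵥ v) := by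
      ext i
      rw [mulVec_mulVec, hkg, ← mulVec_mulVec, mulVec_diagonal, Pi.mul_apply]

lemma sq_mul_one_sub_sq_le_of_smul_eq_mul [DecidableEq ι] {c u D : ι → ℝ} {l M : ℝ} (i₀ : ι)
    (hc : c ⬝ᵥ c = 1) (hu : u ⬝ᵥ u = 1) (hcu : l • c = D * u)
    (hD : ∀ i ≠ i₀, |D i| ≤ M) : l ^ 2 * (1 - c i₀ ^ 2) ≤ M ^ 2 := by
  have hlc : ∀ i, (l * c i) ^ 2 = D i ^ 2 * u i ^ 2 := fun i => by
    rw [← mul_pow, ← smul_eq_mul, ← Pi.smul_apply, hcu, Pi.mul_apply]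
  have hsplit : 1 - c i₀ ^ 2 = ∑ i ∈ univ.erase i₀, c i ^ 2 := by
    rw [← hc, dotProduct, ← add_sum_erase _ _ (mem_univ i₀)]
    simp only [sq, add_sub_cancel_left]
  calc l ^ 2 * (1 - c i₀ ^ 2) = ∑ i ∈ univ.erase i₀, D i ^ 2 * u i ^ 2 := by
        simp only [hsplit, mul_sum, ← hlc, mul_pow]
    _ ≤ ∑ i ∈ univ.erase i₀, M ^ 2 * u i ^ 2 := by
        refine sum_le_sum fun i hi => ?_
        have hDi : D i ^ 2 ≤ M ^ 2 := by
          rw [← sq_abs]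
          exact pow_le_pow_left₀ (abs_nonneg _) (hD i (ne_of_mem_erase hi)) 2
        gcongr
    _ ≤ ∑ i, M ^ 2 * u i ^ 2 :=
        sum_le_sum_of_subset_of_nonneg (erase_subset _ _) fun _ _ _ => by positivity
    _ = M ^ 2 * (u ⬝ᵥ u) := by simp only [mul_sum, dotProduct, sq]
    _ = M ^ 2 := by rw [hu, mul_one]

end

/-- Let `d ≥ 2` and let `g ∈ GL(d, ℝ)` have a singular value decomposition
`g = k D k'` with `k, k'` orthogonal and `D` diagonal with decreasing positive entries.
If `v` is a unit eigenvector of `g` with eigenvalue `λ ≠ 0`, then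
`1 − ⟨v, k e₁⟩² ≤ (D₂₂/|λ|)²`; i.e. the sine of the angle between the eigenline `[v]`
and the Cartan attractor `[k e₁]` of `g` is at most `σ₂(g)/|λ|`. -/
theorem sine_angle_eigenline_cartan_attractor
    (d : ℕ) (hd : 2 ≤ d)
    (g k k' : Matrix (Fin d) (Fin d) ℝ)
    (hk : k * kᵀ = 1) (hk' : k' * k'ᵀ = 1)
    (D : Fin d → ℝ) (hDpos : ∀ i, 0 < D i)
    (hDanti : ∀ i j : Fin d, i ≤ j → D j ≤ D i)
    (hg : g = k * Matrix.diagonal D * k')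
    (v : Fin d → ℝ) (hv : v ⬝ᵥ v = 1)
    (l : ℝ) (hl : l ≠ 0) (heig : g.mulVec v = l • v) :
    1 - (v ⬝ᵥ fun i => k i ⟨0, by omega⟩) ^ 2 ≤ (D ⟨1, by omega⟩ / |l|) ^ 2 := by
  have hc : kᵀ *ᵥ v ⬝ᵥ kᵀ *ᵥ v = 1 :=
    (dotProduct_mulVec_self_of_transpose_mul_self (by rw [transpose_transpose, hk]) v).trans hv
  have hu : k' *ᵥ v ⬝ᵥ k' *ᵥ v = 1 :=
    (dotProduct_mulVec_self_of_transpose_mul_self (mul_eq_one_comm.mp hk') v).trans hv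
  have hcu := smul_transpose_mulVec_eq_mul_mulVec (mul_eq_one_comm.mp hk) hg heig
  have hD : ∀ i ≠ (⟨0, by omega⟩ : Fin d), |D i| ≤ D ⟨1, by omega⟩ := fun i hi => by
    rw [abs_of_pos (hDpos i)]
    exact hDanti _ _ (Fin.le_def.mpr (Nat.one_le_iff_ne_zero.mpr (Fin.val_ne_of_ne hi)))
  have key := sq_mul_one_sub_sq_le_of_smul_eq_mul _ hc hu hcu hD
  rw [mulVec_transpose] at key
  rwa [div_pow, sq_abs, le_div_iff₀ (by positivity), mul_comm]
end

section
/- Let Γ₁ and Γ₂ be groups with finite generating sets S₁ and S₂ respectively. If Γ₁ (with respect to S₁) and Γ₂ (with respect to S₂) both satisfy weak Property U, then the direct product Γ₁ × Γ₂, with the finite generating set (S₁ × {1}) ∪ ({1} × S₂), satisfies weak Property U. -/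
/-- The word length of `γ` with respect to a generating set `S`: the least `n` such that
`γ` is a product of `n` elements of `S ∪ S⁻¹`. -/
noncomputable def wordLength {Γ : Type*} [Group Γ] (S : Set Γ) (γ : Γ) : ℕ :=
  sInf {n : ℕ | ∃ l : List Γ, l.length = n ∧ (∀ x ∈ l, x ∈ S ∨ x⁻¹ ∈ S) ∧ l.prod = γ}

/-- The stable (translation) length `|γ|_∞ = lim_n |γⁿ|/n`; by subadditivity (Fekete's
lemma) the limit exists and equals `inf_{n ≥ 1} |γⁿ|/n`, which we take as definition. -/
noncomputable def stableLength {Γ : Type*} [Group Γ] (S : Set Γ) (γ : Γ) : ℝ :=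
  sInf {x : ℝ | ∃ n : ℕ, 0 < n ∧ x = (wordLength S (γ ^ n) : ℝ) / n}

/-- Weak Property U: there are a finite set `F ⊆ Γ` and constants `C, c > 0` such that each
`γ ∈ Γ` admits `f ∈ F` with `|fγ|_∞ ≥ c·|γ|_Γ − C`. -/
def WeakPropertyU {Γ : Type*} [Group Γ] (S : Set Γ) : Prop :=
  ∃ F : Finset Γ, ∃ C c : ℝ, 0 < C ∧ 0 < c ∧
    ∀ γ : Γ, ∃ f ∈ F, c * (wordLength S γ : ℝ) - C ≤ stableLength S (f * γ)

/-!
Both coordinate projections are word-length non-increasing for the generating set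
`(S₁ × {1}) ∪ ({1} × S₂)`, hence also stable-length non-increasing, while the word length of
`(γ₁, γ₂)` is at most `|γ₁| + |γ₂|`. Given `γ = (γ₁, γ₂)`, say with `|γ₂| ≤ |γ₁|`, take
`f₁ ∈ F₁` for `γ₁`: then `|(f₁, 1) γ|_∞ ≥ |f₁ γ₁|_∞ ≥ c₁|γ₁| − C₁ ≥ (c₁/2)|γ| − C₁`.
-/

open Subgroup

section WordLength

variable {G H : Type*} [Group G] [Group H] {S : Set G} {T : Set H}

theorem wordLength_prod_le_length {l : List G} (hl : ∀ x ∈ l, x ∈ S ∨ x⁻¹ ∈ S) :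
    wordLength S l.prod ≤ l.length :=
  Nat.sInf_le ⟨l, rfl, hl, rfl⟩

theorem exists_list_length_eq_wordLength (hS : closure S = ⊤) (g : G) :
    ∃ l : List G, l.length = wordLength S g ∧ (∀ x ∈ l, x ∈ S ∨ x⁻¹ ∈ S) ∧ l.prod = g := by
  have hg : g ∈ (closure S).toSubmonoid := by rw [hS]; trivial
  rw [closure_toSubmonoid] at hg
  obtain ⟨l, hl, rfl⟩ := Submonoid.exists_list_of_mem_closure hg
  have hne : {n | ∃ l' : List G, l'.length = n ∧ (∀ x ∈ l', x ∈ S ∨ x⁻¹ ∈ S) ∧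
      l'.prod = l.prod}.Nonempty :=
    ⟨l.length, l, rfl, fun x hx => by simpa using hl x hx, rfl⟩
  exact Nat.sInf_mem hne

theorem wordLength_mul_le (hS : closure S = ⊤) (a b : G) :
    wordLength S (a * b) ≤ wordLength S a + wordLength S b := by
  obtain ⟨la, hla, hSa, rfl⟩ := exists_list_length_eq_wordLength hS a
  obtain ⟨lb, hlb, hSb, rfl⟩ := exists_list_length_eq_wordLength hS b
  rw [← List.prod_append, ← hla, ← hlb, ← List.length_append]
  exact wordLength_prod_le_length fun x hx => (List.mem_append.mp hx).elim (hSa x) (hSb x)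

theorem wordLength_map_le (hS : closure S = ⊤) {φ : G →* H}
    (hφ : ∀ s ∈ S, φ s ∈ T ∨ φ s = 1) (g : G) :
    wordLength T (φ g) ≤ wordLength S g := by
  classical
  obtain ⟨l, hl, hlS, rfl⟩ := exists_list_length_eq_wordLength hS g
  have hmem : ∀ y ∈ (l.map φ).filter (· != 1), y ∈ T ∨ y⁻¹ ∈ T := by
    intro y hy
    simp only [List.mem_filter, List.mem_map, bne_iff_ne, ne_eq] at hy
    obtain ⟨⟨x, hx, rfl⟩, hne⟩ := hy
    rcases hlS x hx with hxS | hxS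
    · exact .inl ((hφ x hxS).resolve_right hne)
    · rw [← map_inv]
      exact .inr ((hφ _ hxS).resolve_right (by rwa [map_inv, inv_eq_one]))
  calc wordLength T (φ l.prod)
      = wordLength T ((l.map φ).filter (· != 1)).prod := by
        rw [List.prod_filter_bne_one, map_list_prod]
    _ ≤ ((l.map φ).filter (· != 1)).length := wordLength_prod_le_length hmem
    _ ≤ l.length := (List.length_filter_le _ _).trans (List.length_map _).le
    _ = wordLength S l.prod := hl

theorem stableLength_map_le (hS : closure S = ⊤) {φ : G →* H}
    (hφ : ∀ s ∈ S, φ s ∈ T ∨ φ s = 1) (g : G) :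
    stableLength T (φ g) ≤ stableLength S g := by
  refine le_csInf ⟨_, 1, one_pos, rfl⟩ ?_
  rintro _ ⟨n, hn, rfl⟩
  calc stableLength T (φ g) ≤ wordLength T (φ g ^ n) / n :=
        csInf_le ⟨0, by rintro _ ⟨m, -, rfl⟩; positivity⟩ ⟨n, hn, rfl⟩
    _ ≤ wordLength S (g ^ n) / n := by
        rw [← map_pow]
        gcongr
        exact wordLength_map_le hS hφ _

theorem exists_stableLength_ge_of_retraction (hS : closure S = ⊤) {π : G →* H}
    (hπ : ∀ s ∈ S, π s ∈ T ∨ π s = 1) {ι : H →* G} (hπι : ∀ h, π (ι h) = h)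
    {F : Finset H} {C c : ℝ}
    (hF : ∀ h : H, ∃ f ∈ F, c * (wordLength T h : ℝ) - C ≤ stableLength T (f * h)) (g : G) :
    ∃ f ∈ F, c * (wordLength T (π g) : ℝ) - C ≤ stableLength S (ι f * g) := by
  obtain ⟨f, hfF, hf⟩ := hF (π g)
  refine ⟨f, hfF, hf.trans ?_⟩
  simpa only [map_mul, hπι] using stableLength_map_le hS hπ (ι f * g)

end WordLength

theorem half_min_mul_sub_max_le {a b A B L x y : ℝ} (ha : 0 ≤ a) (hb : 0 ≤ b) (hy : 0 ≤ y)
    (hL : L ≤ x + y) (hyx : y ≤ x) : min a b / 2 * L - max A B ≤ a * x - A := by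
  nlinarith [min_le_left a b, le_min ha hb, le_max_left A B]

section Prod

open MonoidHom

variable {Γ₁ Γ₂ : Type*} [Group Γ₁] [Group Γ₂] {S₁ : Set Γ₁} {S₂ : Set Γ₂}

theorem closure_image_inl_union_image_inr (hS₁ : closure S₁ = ⊤) (hS₂ : closure S₂ = ⊤) :
    closure (inl Γ₁ Γ₂ '' S₁ ∪ inr Γ₁ Γ₂ '' S₂) = ⊤ := by
  rw [eq_top_iff, ← top_prod_top, prod_le_iff, ← hS₁, ← hS₂, map_closure, map_closure]
  exact ⟨closure_mono Set.subset_union_left, closure_mono Set.subset_union_right⟩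

theorem fst_mem_or_eq_one_of_mem_image_inl_union_image_inr :
    ∀ s ∈ inl Γ₁ Γ₂ '' S₁ ∪ inr Γ₁ Γ₂ '' S₂, fst Γ₁ Γ₂ s ∈ S₁ ∨ fst Γ₁ Γ₂ s = 1 := by
  rintro _ (⟨s, hs, rfl⟩ | ⟨s, hs, rfl⟩) <;> simp [hs]

theorem snd_mem_or_eq_one_of_mem_image_inl_union_image_inr :
    ∀ s ∈ inl Γ₁ Γ₂ '' S₁ ∪ inr Γ₁ Γ₂ '' S₂, snd Γ₁ Γ₂ s ∈ S₂ ∨ snd Γ₁ Γ₂ s = 1 := by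
  rintro _ (⟨s, hs, rfl⟩ | ⟨s, hs, rfl⟩) <;> simp [hs]

theorem wordLength_image_inl_union_image_inr_le (hS₁ : closure S₁ = ⊤)
    (hS₂ : closure S₂ = ⊤) (γ : Γ₁ × Γ₂) :
    wordLength (inl Γ₁ Γ₂ '' S₁ ∪ inr Γ₁ Γ₂ '' S₂) γ ≤ wordLength S₁ γ.1 + wordLength S₂ γ.2 := by
  calc wordLength (inl Γ₁ Γ₂ '' S₁ ∪ inr Γ₁ Γ₂ '' S₂) γ
      = wordLength (inl Γ₁ Γ₂ '' S₁ ∪ inr Γ₁ Γ₂ '' S₂) (inl Γ₁ Γ₂ γ.1 * inr Γ₁ Γ₂ γ.2) := by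
        simp
    _ ≤ _ := wordLength_mul_le (closure_image_inl_union_image_inr hS₁ hS₂) _ _
    _ ≤ _ := add_le_add
        (wordLength_map_le (φ := inl Γ₁ Γ₂) hS₁ (fun s hs => Or.inl (Or.inl ⟨s, hs, rfl⟩)) _)
        (wordLength_map_le (φ := inr Γ₁ Γ₂) hS₂ (fun s hs => Or.inl (Or.inr ⟨s, hs, rfl⟩)) _)

end Prod

open MonoidHom in
theorem weakPropertyU_prod_general
    {Γ₁ Γ₂ : Type*} [Group Γ₁] [Group Γ₂]
    (S₁ : Set Γ₁) (S₂ : Set Γ₂)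
    (hS₁gen : Subgroup.closure S₁ = ⊤) (hS₂gen : Subgroup.closure S₂ = ⊤)
    (h₁ : WeakPropertyU S₁) (h₂ : WeakPropertyU S₂) :
    WeakPropertyU ((fun g => (g, (1 : Γ₂))) '' S₁ ∪ (fun g => ((1 : Γ₁), g)) '' S₂) := by
  classical
  change WeakPropertyU (inl Γ₁ Γ₂ '' S₁ ∪ inr Γ₁ Γ₂ '' S₂)
  obtain ⟨F₁, C₁, c₁, hC₁, hc₁, hF₁⟩ := h₁
  obtain ⟨F₂, C₂, c₂, -, hc₂, hF₂⟩ := h₂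
  have hS := closure_image_inl_union_image_inr hS₁gen hS₂gen
  refine ⟨F₁.image (inl Γ₁ Γ₂) ∪ F₂.image (inr Γ₁ Γ₂), max C₁ C₂, min c₁ c₂ / 2,
    lt_max_of_lt_left hC₁, by positivity, fun γ => ?_⟩
  have hγ : (wordLength (inl Γ₁ Γ₂ '' S₁ ∪ inr Γ₁ Γ₂ '' S₂) γ : ℝ) ≤
      wordLength S₁ γ.1 + wordLength S₂ γ.2 := by
    exact_mod_cast wordLength_image_inl_union_image_inr_le hS₁gen hS₂gen γ
  rcases le_total (wordLength S₂ γ.2) (wordLength S₁ γ.1) with hle | hle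
  · obtain ⟨f, hfF, hf⟩ := exists_stableLength_ge_of_retraction hS
      fst_mem_or_eq_one_of_mem_image_inl_union_image_inr (ι := inl Γ₁ Γ₂) (fun _ => rfl) hF₁ γ
    refine ⟨_, Finset.mem_union_left _ (Finset.mem_image_of_mem _ hfF), le_trans ?_ hf⟩
    exact half_min_mul_sub_max_le hc₁.le hc₂.le (Nat.cast_nonneg _) hγ (by exact_mod_cast hle)
  · obtain ⟨f, hfF, hf⟩ := exists_stableLength_ge_of_retraction hS
      snd_mem_or_eq_one_of_mem_image_inl_union_image_inr (ι := inr Γ₁ Γ₂) (fun _ => rfl) hF₂ γ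
    refine ⟨_, Finset.mem_union_right _ (Finset.mem_image_of_mem _ hfF), le_trans ?_ hf⟩
    rw [min_comm, max_comm]
    exact half_min_mul_sub_max_le hc₂.le hc₁.le (Nat.cast_nonneg _) (hγ.trans_eq (add_comm _ _))
      (by exact_mod_cast hle)

/-- If `Γ₁` (with finite generating set `S₁`) and `Γ₂` (with finite
generating set `S₂`) satisfy weak Property U, then so does `Γ₁ × Γ₂` with the generating
set `(S₁ × {1}) ∪ ({1} × S₂)`. -/
theorem weakPropertyU_prod
    {Γ₁ Γ₂ : Type*} [Group Γ₁] [Group Γ₂]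
    (S₁ : Set Γ₁) (S₂ : Set Γ₂)
    (hS₁fin : S₁.Finite) (hS₂fin : S₂.Finite)
    (hS₁gen : Subgroup.closure S₁ = ⊤) (hS₂gen : Subgroup.closure S₂ = ⊤)
    (h₁ : WeakPropertyU S₁) (h₂ : WeakPropertyU S₂) :
    WeakPropertyU ((fun g => (g, (1 : Γ₂))) '' S₁ ∪ (fun g => ((1 : Γ₁), g)) '' S₂) :=
  weakPropertyU_prod_general S₁ S₂ hS₁gen hS₂gen h₁ h₂
end

section
/- Let Γ₁ and Γ₂ be groups with finite generating sets S₁ and S₂ respectively, and let φ : Γ₁ → Γ₂ be a surjective group homomorphism which is a quasi-isometry, i.e., there exist A ≥ 1 and B ≥ 0 with (1/A)·|γ|₁ − B ≤ |φ(γ)|₂ ≤ A·|γ|₁ + B for all γ ∈ Γ₁, where |·|₁ and |·|₂ are the word lengths with respect to S₁ and S₂. If Γ₁ satisfies weak Property U (with respect to S₁), then Γ₂ satisfies weak Property U (with respect to S₂). -/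
/-!
A surjection `φ` lets every `γ₂ ∈ Γ₂` be written as `φ γ₁`, and `φ (F)` serves as the finite set
for `Γ₂`. The lower quasi-isometry bound, applied to the powers `(fγ₁)ⁿ` and divided by `n`, passes
to stable lengths: `|φ(fγ₁)|_∞ ≥ |fγ₁|_∞ / A − B`. The upper bound gives `|γ₁|₁ ≥ (|γ₂|₂ − B) / A`,
so `|φ(f) γ₂|_∞` grows at least like `c / A² · |γ₂|₂`.
-/

section StableLength

variable {Γ : Type*} [Group Γ] (S : Set Γ)

lemma stableLength_le_wordLength_pow_div (γ : Γ) {n : ℕ} (hn : 0 < n) :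
    stableLength S γ ≤ (wordLength S (γ ^ n) : ℝ) / n :=
  csInf_le ⟨0, by rintro _ ⟨m, -, rfl⟩; positivity⟩ ⟨n, hn, rfl⟩

lemma le_stableLength {γ : Γ} {x : ℝ}
    (h : ∀ n : ℕ, 0 < n → x ≤ (wordLength S (γ ^ n) : ℝ) / n) :
    x ≤ stableLength S γ :=
  le_csInf ⟨_, 1, one_pos, rfl⟩ (by rintro _ ⟨n, hn, rfl⟩; exact h n hn)

end StableLength

lemma mul_stableLength_sub_le_stableLength_map {Γ₁ Γ₂ : Type*} [Group Γ₁] [Group Γ₂]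
    (S₁ : Set Γ₁) (S₂ : Set Γ₂) (φ : Γ₁ →* Γ₂) {a B : ℝ} (ha : 0 ≤ a) (hB : 0 ≤ B)
    (hφ : ∀ γ, a * (wordLength S₁ γ : ℝ) - B ≤ wordLength S₂ (φ γ)) (x : Γ₁) :
    a * stableLength S₁ x - B ≤ stableLength S₂ (φ x) := by
  refine le_stableLength S₂ fun n hn ↦ ?_
  have hn' : (1 : ℝ) ≤ n := by exact_mod_cast hn
  calc a * stableLength S₁ x - B
      ≤ a * ((wordLength S₁ (x ^ n) : ℝ) / n) - B / n := by
        gcongr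
        · exact stableLength_le_wordLength_pow_div S₁ x hn
        · exact div_le_self hB hn'
    _ = (a * wordLength S₁ (x ^ n) - B) / n := by ring
    _ ≤ (wordLength S₂ (φ x ^ n) : ℝ) / n := by
        rw [← map_pow]
        gcongr
        exact hφ _

theorem weakPropertyU_of_surjective_quasiIsometry_general
    {Γ₁ Γ₂ : Type*} [Group Γ₁] [Group Γ₂]
    (S₁ : Set Γ₁) (S₂ : Set Γ₂)
    (φ : Γ₁ →* Γ₂) (hφsurj : Function.Surjective φ)
    (A B : ℝ) (hA : 1 ≤ A) (hB : 0 ≤ B)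
    (hqi : ∀ γ : Γ₁,
      (1 / A) * (wordLength S₁ γ : ℝ) - B ≤ (wordLength S₂ (φ γ) : ℝ) ∧
      (wordLength S₂ (φ γ) : ℝ) ≤ A * (wordLength S₁ γ : ℝ) + B)
    (h₁ : WeakPropertyU S₁) :
    WeakPropertyU S₂ := by
  classical
  obtain ⟨F, C, c, hC, hc, hU⟩ := h₁
  have hA0 : 0 < A := one_pos.trans_le hA
  have hstable := mul_stableLength_sub_le_stableLength_map S₁ S₂ φ (by positivity) hB
    fun γ ↦ (hqi γ).1
  refine ⟨F.image φ, c / A ^ 2 * B + C / A + B, c / A ^ 2, by positivity, by positivity, ?_⟩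
  intro γ₂
  obtain ⟨γ₁, rfl⟩ := hφsurj γ₂
  obtain ⟨f, hf, hfγ₁⟩ := hU γ₁
  refine ⟨φ f, Finset.mem_image_of_mem φ hf, ?_⟩
  calc c / A ^ 2 * (wordLength S₂ (φ γ₁) : ℝ) - (c / A ^ 2 * B + C / A + B)
      ≤ c / A ^ 2 * (A * wordLength S₁ γ₁ + B) - (c / A ^ 2 * B + C / A + B) := by
        gcongr
        exact (hqi γ₁).2
    _ = 1 / A * (c * wordLength S₁ γ₁ - C) - B := by field_simp; ring
    _ ≤ 1 / A * stableLength S₁ (f * γ₁) - B := by gcongr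
    _ ≤ stableLength S₂ (φ f * φ γ₁) := map_mul φ f γ₁ ▸ hstable (f * γ₁)

/-- Weak Property U is inherited under a surjective homomorphism which is
a quasi-isometry: if `φ : Γ₁ → Γ₂` is a surjective group homomorphism with
`(1/A)|γ|₁ − B ≤ |φ(γ)|₂ ≤ A|γ|₁ + B` and `Γ₁` satisfies weak Property U, then so
does `Γ₂`. -/
theorem weakPropertyU_of_surjective_quasiIsometry
    {Γ₁ Γ₂ : Type*} [Group Γ₁] [Group Γ₂]
    (S₁ : Set Γ₁) (S₂ : Set Γ₂)
    (hS₁fin : S₁.Finite) (hS₂fin : S₂.Finite)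
    (hS₁gen : Subgroup.closure S₁ = ⊤) (hS₂gen : Subgroup.closure S₂ = ⊤)
    (φ : Γ₁ →* Γ₂) (hφsurj : Function.Surjective φ)
    (A B : ℝ) (hA : 1 ≤ A) (hB : 0 ≤ B)
    (hqi : ∀ γ : Γ₁,
      (1 / A) * (wordLength S₁ γ : ℝ) - B ≤ (wordLength S₂ (φ γ) : ℝ) ∧
      (wordLength S₂ (φ γ) : ℝ) ≤ A * (wordLength S₁ γ : ℝ) + B)
    (h₁ : WeakPropertyU S₁) :
    WeakPropertyU S₂ :=
  weakPropertyU_of_surjective_quasiIsometry_general S₁ S₂ φ hφsurj A B hA hB hqi h₁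
end

section
/- Let m, d ≥ 3, A ∈ GL(m, ℝ), B ∈ GL(d, ℝ), and let A ⊗ B ∈ GL(md, ℝ) denote the Kronecker (tensor) product. Then: (a) σ₂(A ⊗ B)/σ₃(A ⊗ B) ≤ exp | log(σ₁(A)/σ₂(A)) − log(σ₁(B)/σ₂(B)) |; and (b) σ₂(A ⊗ B)/σ₃(A ⊗ B) ≥ min( exp | log(σ₁(A)/σ₂(A)) − log(σ₁(B)/σ₂(B)) |, σ₂(A)/σ₃(A), σ₂(B)/σ₃(B) ). -/
open Matrix

/-- The list of singular values of a real square matrix, in decreasing order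
(the square roots of the eigenvalues of `Aᴴ * A`). -/
noncomputable def svalList {n : Type*} [Fintype n] [DecidableEq n]
    (A : Matrix n n ℝ) : List ℝ :=
  (Multiset.sort
    (Finset.univ.val.map fun i =>
      Real.sqrt ((Matrix.isHermitian_conjTranspose_mul_self A).eigenvalues i)) (· ≤ ·)).reverse

/-- `sval j A` is the `j`-th largest singular value `σⱼ(A)` of `A` (1-indexed). -/
noncomputable def sval {n : Type*} [Fintype n] [DecidableEq n]
    (j : ℕ) (A : Matrix n n ℝ) : ℝ :=
  (svalList A).getD (j - 1) 0

/-!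
The singular values of `A ⊗ B` are the pairwise products of those of `A` and `B`, since
`(A ⊗ B)ᴴ (A ⊗ B) = AᴴA ⊗ BᴴB` is diagonalised by the Kronecker product of the unitaries
diagonalising `AᴴA` and `BᴴB`. If `a₀ ≥ a₁ ≥ a₂ ≥ …` and `b₀ ≥ b₁ ≥ b₂ ≥ …` are the singular values
of `A` and `B`, the largest products are `a₀b₀`, then `max (a₀b₁) (a₁b₀)`, then
`max (min (a₀b₁) (a₁b₀)) (max (a₂b₀) (a₀b₂))`. As `exp |log (a₀/a₁) - log (b₀/b₁)|` is the ratio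
`max (a₀b₁) (a₁b₀) / min (a₀b₁) (a₁b₀)`, both bounds follow by comparing `σ₃(A ⊗ B)` with each of
the three candidates for it.
-/

open scoped Kronecker

namespace Multiset

theorem map_product_map {α β γ δ : Type*} (s : Multiset α) (t : Multiset β) (f : α → γ)
    (g : β → δ) : s.map f ×ˢ t.map g = (s ×ˢ t).map (Prod.map f g) := by
  induction s using Multiset.induction <;> simp_all [Multiset.map_map]

theorem map_mul_product_comm {α : Type*} [CommMagma α] (s t : Multiset α) :
    (t ×ˢ s).map (fun p => p.1 * p.2) = (s ×ˢ t).map fun p => p.1 * p.2 := by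
  rw [← map_swap_product, Multiset.map_map]
  exact map_congr rfl fun p _ => mul_comm _ _

variable {α : Type*} [LinearOrder α]

theorem reverse_sort_le (s : Multiset α) : (s.sort (· ≤ ·)).reverse = s.sort (· ≥ ·) :=
  List.Perm.eq_of_pairwise' (List.pairwise_reverse.mpr (pairwise_sort _ _)) (pairwise_sort _ _)
    ((List.reverse_perm _).trans (by rw [← coe_eq_coe, sort_eq, sort_eq]))

theorem exists_sort_ge_eq_cons_cons_cons {s : Multiset α} (hs : 3 ≤ card s) :
    ∃ x₀ x₁ x₂ l, s.sort (· ≥ ·) = x₀ :: x₁ :: x₂ :: l := by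
  rw [← length_sort (· ≥ ·)] at hs
  match s.sort (· ≥ ·), hs with
  | x₀ :: x₁ :: x₂ :: l, _ => exact ⟨x₀, x₁, x₂, l, rfl⟩

theorem sort_ge_cons_cons_cons {x₀ x₁ x₂ : α} {r : Multiset α} (h₁ : x₁ ≤ x₀) (h₂ : x₂ ≤ x₁)
    (hr : ∀ y ∈ r, y ≤ x₂) :
    (x₀ ::ₘ x₁ ::ₘ x₂ ::ₘ r).sort (· ≥ ·) = x₀ :: x₁ :: x₂ :: r.sort (· ≥ ·) := by
  have hr₁ : ∀ y ∈ r, y ≤ x₁ := fun y hy => (hr y hy).trans h₂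
  rw [sort_cons x₀ _ (· ≥ ·) (by simpa [h₁, h₂.trans h₁] using fun y hy => (hr₁ y hy).trans h₁),
    sort_cons x₁ _ (· ≥ ·) (by simpa [h₂] using hr₁), sort_cons x₂ _ (· ≥ ·) hr]

theorem eq_cons_cons_cons_of_sort_ge {s : Multiset α} {x₀ x₁ x₂ : α} {l : List α}
    (h : s.sort (· ≥ ·) = x₀ :: x₁ :: x₂ :: l) :
    s = x₀ ::ₘ x₁ ::ₘ x₂ ::ₘ (l : Multiset α) ∧ x₁ ≤ x₀ ∧ x₂ ≤ x₁ ∧ ∀ y ∈ l, y ≤ x₂ := by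
  have hsorted := pairwise_sort s (· ≥ ·)
  rw [h] at hsorted
  simp only [List.pairwise_cons, List.mem_cons] at hsorted
  exact ⟨by rw [← sort_eq s (· ≥ ·), h]; rfl, hsorted.1 _ (.inl rfl), hsorted.2.1 _ (.inl rfl),
    hsorted.2.2.1⟩

end Multiset

section ProductOrderStatistics

open Multiset

variable {s t : Multiset ℝ} {a₀ a₁ a₂ b₀ b₁ b₂ : ℝ} {la lb : List ℝ}

theorem sort_ge_map_mul_product_of_le (hs₀ : ∀ x ∈ s, 0 ≤ x) (ht₀ : ∀ y ∈ t, 0 ≤ y)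
    (hs : s.sort (· ≥ ·) = a₀ :: a₁ :: a₂ :: la) (ht : t.sort (· ≥ ·) = b₀ :: b₁ :: b₂ :: lb)
    (h : a₁ * b₀ ≤ a₀ * b₁) :
    ∃ l, ((s ×ˢ t).map fun p => p.1 * p.2).sort (· ≥ ·) =
      a₀ * b₀ :: a₀ * b₁ :: max (a₁ * b₀) (a₀ * b₂) :: l := by
  obtain ⟨rfl, -, ha₂, hla⟩ := eq_cons_cons_cons_of_sort_ge hs
  obtain ⟨rfl, hb₁, hb₂, hlb⟩ := eq_cons_cons_cons_of_sort_ge ht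
  set t := b₀ ::ₘ b₁ ::ₘ b₂ ::ₘ (lb : Multiset ℝ)
  set r := (lb : Multiset ℝ).map (a₀ * ·) + (b₁ ::ₘ b₂ ::ₘ (lb : Multiset ℝ)).map (a₁ * ·) +
    ((a₂ ::ₘ (la : Multiset ℝ)) ×ˢ t).map fun p => p.1 * p.2
  have hdecomp : ((a₀ ::ₘ a₁ ::ₘ a₂ ::ₘ (la : Multiset ℝ)) ×ˢ t).map (fun p => p.1 * p.2) =
      a₀ * b₀ ::ₘ a₀ * b₁ ::ₘ max (a₁ * b₀) (a₀ * b₂) ::ₘ min (a₁ * b₀) (a₀ * b₂) ::ₘ r := by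
    have hswap : a₀ * b₂ ::ₘ a₁ * b₀ ::ₘ r =
        max (a₁ * b₀) (a₀ * b₂) ::ₘ min (a₁ * b₀) (a₀ * b₂) ::ₘ r := by
      rcases le_total (a₁ * b₀) (a₀ * b₂) with hle | hle
      · rw [max_eq_right hle, min_eq_left hle]
      · rw [max_eq_left hle, min_eq_right hle, Multiset.cons_swap]
    rw [← hswap, cons_product, cons_product, Multiset.map_add, Multiset.map_add,
      Multiset.map_map, Multiset.map_map]
    simp only [r, t, Function.comp_def, Multiset.map_cons]
    simp only [← singleton_add]
    abel
  have ha₀ : 0 ≤ a₀ := hs₀ a₀ (mem_cons_self _ _)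
  have ha₁ : 0 ≤ a₁ := hs₀ a₁ (by simp)
  have hla₁ : ∀ x ∈ a₂ ::ₘ (la : Multiset ℝ), x ≤ a₁ := by
    simpa [ha₂] using fun x hx => (hla x hx).trans ha₂
  have ht_le : ∀ y ∈ t, y ≤ b₀ := by
    simpa [t, hb₁, hb₂.trans hb₁] using fun y hy => ((hlb y hy).trans hb₂).trans hb₁
  have hr : ∀ y ∈ min (a₁ * b₀) (a₀ * b₂) ::ₘ r, y ≤ max (a₁ * b₀) (a₀ * b₂) := by
    intro y hy
    rcases mem_cons.mp hy with rfl | hy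
    · exact min_le_max
    simp only [r, mem_add, mem_map, mem_product] at hy
    rcases hy with (⟨z, hz, rfl⟩ | ⟨z, hz, rfl⟩) | ⟨⟨x, z⟩, ⟨hx, hz⟩, rfl⟩
    · exact le_max_of_le_right (mul_le_mul_of_nonneg_left (hlb z hz) ha₀)
    · exact le_max_of_le_left (mul_le_mul_of_nonneg_left (ht_le z (mem_cons_of_mem hz)) ha₁)
    · exact le_max_of_le_left (mul_le_mul (hla₁ x hx) (ht_le z hz) (ht₀ z hz) ha₁)
  exact ⟨_, hdecomp ▸ sort_ge_cons_cons_cons (mul_le_mul_of_nonneg_left hb₁ ha₀)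
    (max_le h (mul_le_mul_of_nonneg_left hb₂ ha₀)) hr⟩

theorem sort_ge_map_mul_product (hs₀ : ∀ x ∈ s, 0 ≤ x) (ht₀ : ∀ y ∈ t, 0 ≤ y)
    (hs : s.sort (· ≥ ·) = a₀ :: a₁ :: a₂ :: la) (ht : t.sort (· ≥ ·) = b₀ :: b₁ :: b₂ :: lb) :
    ∃ l, ((s ×ˢ t).map fun p => p.1 * p.2).sort (· ≥ ·) =
      a₀ * b₀ :: max (a₀ * b₁) (a₁ * b₀) ::
        max (min (a₀ * b₁) (a₁ * b₀)) (max (a₂ * b₀) (a₀ * b₂)) :: l := by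
  obtain ⟨-, -, ha₂, -⟩ := eq_cons_cons_cons_of_sort_ge hs
  obtain ⟨-, -, hb₂, -⟩ := eq_cons_cons_cons_of_sort_ge ht
  have ha₀ : 0 ≤ a₀ := hs₀ a₀ (by rw [← mem_sort (· ≥ ·), hs]; simp)
  have hb₀ : 0 ≤ b₀ := ht₀ b₀ (by rw [← mem_sort (· ≥ ·), ht]; simp)
  rcases le_total (a₁ * b₀) (a₀ * b₁) with h | h
  · obtain ⟨l, hl⟩ := sort_ge_map_mul_product_of_le hs₀ ht₀ hs ht h
    refine ⟨l, hl.trans ?_⟩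
    rw [max_eq_left h, min_eq_right h, ← max_assoc,
      max_eq_left (mul_le_mul_of_nonneg_right ha₂ hb₀)]
  · obtain ⟨l, hl⟩ := sort_ge_map_mul_product_of_le ht₀ hs₀ ht hs (by linarith)
    refine ⟨l, (map_mul_product_comm s t ▸ hl).trans ?_⟩
    rw [max_eq_right h, min_eq_left h, max_comm (a₂ * b₀), ← max_assoc,
      max_eq_left (mul_le_mul_of_nonneg_left hb₂ ha₀), mul_comm b₀, mul_comm b₀, mul_comm b₁,
      mul_comm b₀]

end ProductOrderStatistics

namespace Matrix.IsHermitian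

open Polynomial

variable {𝕜 m n : Type*} [RCLike 𝕜] [Fintype m] [DecidableEq m] [Fintype n] [DecidableEq n]
  {P : Matrix m m 𝕜} {Q : Matrix n n 𝕜}

theorem charpoly_kronecker (hP : P.IsHermitian) (hQ : Q.IsHermitian) :
    (P ⊗ₖ Q).charpoly =
      ∏ p : m × n, (X - C ((hP.eigenvalues p.1 * hQ.eigenvalues p.2 : ℝ) : 𝕜)) := by
  set U := (hP.eigenvectorUnitary : Matrix m m 𝕜)
  set V := (hQ.eigenvectorUnitary : Matrix n n 𝕜)
  have hUV : (star U ⊗ₖ star V) * (U ⊗ₖ V) = 1 := by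
    rw [← mul_kronecker_mul, Unitary.coe_star_mul_self, Unitary.coe_star_mul_self,
      one_kronecker_one]
  conv_lhs => rw [hP.spectral_theorem, hQ.spectral_theorem, Unitary.conjStarAlgAut_apply,
    Unitary.conjStarAlgAut_apply, mul_kronecker_mul, mul_kronecker_mul, charpoly_mul_comm,
    ← mul_assoc, hUV, one_mul, diagonal_kronecker_diagonal, charpoly_diagonal]
  simp

theorem roots_charpoly_kronecker (hP : P.IsHermitian) (hQ : Q.IsHermitian) :
    (P ⊗ₖ Q).charpoly.roots = (P.charpoly.roots ×ˢ Q.charpoly.roots).map fun p => p.1 * p.2 := by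
  rw [hP.roots_charpoly_eq_eigenvalues, hQ.roots_charpoly_eq_eigenvalues,
    Multiset.map_product_map, Multiset.map_map, hP.charpoly_kronecker hQ,
    roots_prod _ _ (Finset.prod_ne_zero_iff.mpr fun _ _ => X_sub_C_ne_zero _)]
  simp only [roots_X_sub_C, Multiset.bind_singleton, ← Finset.univ_product_univ,
    Finset.product_val, Function.comp_def, RCLike.ofReal_mul, Prod.map_fst, Prod.map_snd]

end Matrix.IsHermitian

section SingularValues

variable {m n : Type*} [Fintype m] [DecidableEq m] [Fintype n] [DecidableEq n]

noncomputable def singularValues (M : Matrix n n ℝ) : Multiset ℝ :=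
  Finset.univ.val.map fun i => √((isHermitian_conjTranspose_mul_self M).eigenvalues i)

theorem svalList_eq_sort_ge (M : Matrix n n ℝ) :
    svalList M = (singularValues M).sort (· ≥ ·) :=
  Multiset.reverse_sort_le _

theorem card_singularValues (M : Matrix n n ℝ) :
    Multiset.card (singularValues M) = Fintype.card n := by
  simp [singularValues]

theorem singularValues_eq_map_sqrt_roots (M : Matrix n n ℝ) :
    singularValues M = (Mᴴ * M).charpoly.roots.map Real.sqrt := by
  rw [(isHermitian_conjTranspose_mul_self M).roots_charpoly_eq_eigenvalues, Multiset.map_map]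
  rfl

theorem singularValues_kronecker (A : Matrix m m ℝ) (B : Matrix n n ℝ) :
    singularValues (A ⊗ₖ B) =
      (singularValues A ×ˢ singularValues B).map fun p => p.1 * p.2 := by
  have hroots : ∀ x ∈ (Aᴴ * A).charpoly.roots, 0 ≤ x := by
    rw [(isHermitian_conjTranspose_mul_self A).roots_charpoly_eq_eigenvalues]
    simpa using eigenvalues_conjTranspose_mul_self_nonneg A
  rw [singularValues_eq_map_sqrt_roots, singularValues_eq_map_sqrt_roots,
    singularValues_eq_map_sqrt_roots, conjTranspose_kronecker, ← mul_kronecker_mul,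
    (isHermitian_conjTranspose_mul_self A).roots_charpoly_kronecker
      (isHermitian_conjTranspose_mul_self B),
    Multiset.map_map, Multiset.map_product_map, Multiset.map_map]
  refine Multiset.map_congr rfl fun p hp => ?_
  exact Real.sqrt_mul (hroots p.1 (Multiset.mem_product.mp hp).1) p.2

theorem pos_of_mem_singularValues {M : Matrix n n ℝ} (hM : IsUnit M.det) :
    ∀ x ∈ singularValues M, 0 < x := by
  have hpos := (isHermitian_conjTranspose_mul_self M).posDef_iff_eigenvalues_pos.mp
    (PosDef.conjTranspose_mul_self M (mulVec_injective_iff_isUnit.mpr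
      ((isUnit_iff_isUnit_det M).mpr hM)))
  simpa [singularValues] using fun i => hpos i

end SingularValues

theorem min_div_le_div_max {α : Type*} [LinearOrder α] [Div α] (x a b : α) :
    min (x / a) (x / b) ≤ x / max a b := by
  rcases max_choice a b with h | h <;> rw [h]
  exacts [min_le_left _ _, min_le_right _ _]

theorem Real.exp_abs_log_sub_log {x y : ℝ} (hx : 0 < x) (hy : 0 < y) :
    Real.exp |Real.log x - Real.log y| = max x y / min x y := by
  rcases le_total x y with h | h
  · rw [abs_sub_comm, abs_of_nonneg (by linarith [Real.log_le_log hx h]),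
      ← Real.log_div hy.ne' hx.ne', Real.exp_log (div_pos hy hx), max_eq_right h, min_eq_left h]
  · rw [abs_of_nonneg (by linarith [Real.log_le_log hy h]), ← Real.log_div hx.ne' hy.ne',
      Real.exp_log (div_pos hx hy), max_eq_left h, min_eq_right h]

theorem product_gap_bounds {a₀ a₁ a₂ b₀ b₁ b₂ : ℝ} (ha₀ : 0 < a₀) (ha₁ : 0 < a₁) (ha₂ : 0 < a₂)
    (hb₀ : 0 < b₀) (hb₁ : 0 < b₁) (hb₂ : 0 < b₂) :
    max (a₀ * b₁) (a₁ * b₀) / max (min (a₀ * b₁) (a₁ * b₀)) (max (a₂ * b₀) (a₀ * b₂)) ≤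
        Real.exp |Real.log (a₀ / a₁) - Real.log (b₀ / b₁)| ∧
      min (Real.exp |Real.log (a₀ / a₁) - Real.log (b₀ / b₁)|) (min (a₁ / a₂) (b₁ / b₂)) ≤
        max (a₀ * b₁) (a₁ * b₀) / max (min (a₀ * b₁) (a₁ * b₀)) (max (a₂ * b₀) (a₀ * b₂)) := by
  set P := max (a₀ * b₁) (a₁ * b₀)
  have hE : Real.exp |Real.log (a₀ / a₁) - Real.log (b₀ / b₁)| = P / min (a₀ * b₁) (a₁ * b₀) := by
    rw [← Real.exp_abs_log_sub_log (by positivity) (by positivity), Real.log_div ha₀.ne' ha₁.ne',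
      Real.log_div hb₀.ne' hb₁.ne', Real.log_mul ha₀.ne' hb₁.ne', Real.log_mul ha₁.ne' hb₀.ne']
    ring_nf
  have ha : a₁ / a₂ ≤ P / (a₂ * b₀) := by
    rw [← mul_div_mul_right a₁ a₂ hb₀.ne']
    exact div_le_div_of_nonneg_right (le_max_right _ _) (by positivity)
  have hb : b₁ / b₂ ≤ P / (a₀ * b₂) := by
    rw [← mul_div_mul_left b₁ b₂ ha₀.ne']
    exact div_le_div_of_nonneg_right (le_max_left _ _) (by positivity)
  rw [hE]
  refine ⟨div_le_div_of_nonneg_left (by positivity) (by positivity) (le_max_left _ _), ?_⟩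
  calc min (P / min (a₀ * b₁) (a₁ * b₀)) (min (a₁ / a₂) (b₁ / b₂))
      ≤ min (P / min (a₀ * b₁) (a₁ * b₀)) (P / max (a₂ * b₀) (a₀ * b₂)) :=
        min_le_min_left _ ((min_le_min ha hb).trans (min_div_le_div_max _ _ _))
    _ ≤ _ := min_div_le_div_max _ _ _

/-- For `A ∈ GL(m, ℝ)`, `B ∈ GL(d, ℝ)` (`m, d ≥ 3`) and the Kronecker
product `A ⊗ B`:
(a) `σ₂(A⊗B)/σ₃(A⊗B) ≤ exp|log(σ₁A/σ₂A) − log(σ₁B/σ₂B)|` and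
(b) `σ₂(A⊗B)/σ₃(A⊗B) ≥ min(exp|log(σ₁A/σ₂A) − log(σ₁B/σ₂B)|, σ₂A/σ₃A, σ₂B/σ₃B)`. -/
theorem kronecker_singular_value_gap
    (m d : ℕ) (hm : 3 ≤ m) (hd : 3 ≤ d)
    (A : Matrix (Fin m) (Fin m) ℝ) (B : Matrix (Fin d) (Fin d) ℝ)
    (hA : IsUnit A.det) (hB : IsUnit B.det) :
    sval 2 (Matrix.kronecker A B) / sval 3 (Matrix.kronecker A B) ≤
        Real.exp |Real.log (sval 1 A / sval 2 A) - Real.log (sval 1 B / sval 2 B)| ∧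
      min (Real.exp |Real.log (sval 1 A / sval 2 A) - Real.log (sval 1 B / sval 2 B)|)
          (min (sval 2 A / sval 3 A) (sval 2 B / sval 3 B)) ≤
        sval 2 (Matrix.kronecker A B) / sval 3 (Matrix.kronecker A B) := by
  obtain ⟨a₀, a₁, a₂, la, hsA⟩ := Multiset.exists_sort_ge_eq_cons_cons_cons
    (by simpa [card_singularValues] using hm : 3 ≤ Multiset.card (singularValues A))
  obtain ⟨b₀, b₁, b₂, lb, hsB⟩ := Multiset.exists_sort_ge_eq_cons_cons_cons
    (by simpa [card_singularValues] using hd : 3 ≤ Multiset.card (singularValues B))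
  have hposA : ∀ x ∈ a₀ :: a₁ :: a₂ :: la, 0 < x := fun x hx =>
    pos_of_mem_singularValues hA x (by rwa [← Multiset.mem_sort (· ≥ ·), hsA])
  have hposB : ∀ x ∈ b₀ :: b₁ :: b₂ :: lb, 0 < x := fun x hx =>
    pos_of_mem_singularValues hB x (by rwa [← Multiset.mem_sort (· ≥ ·), hsB])
  simp only [List.forall_mem_cons] at hposA hposB
  obtain ⟨ha₀, ha₁, ha₂, -⟩ := hposA
  obtain ⟨hb₀, hb₁, hb₂, -⟩ := hposB
  obtain ⟨l, hl⟩ := sort_ge_map_mul_product (fun x hx => (pos_of_mem_singularValues hA x hx).le)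
    (fun x hx => (pos_of_mem_singularValues hB x hx).le) hsA hsB
  simp only [sval, svalList_eq_sort_ge, Matrix.kronecker, singularValues_kronecker, hl, hsA, hsB,
    List.getD_cons_zero, List.getD_cons_succ]
  exact product_gap_bounds ha₀ ha₁ ha₂ hb₀ hb₁ hb₂
end
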